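/- Let S and T be finsets of ι and let a, b, c ∈ ι be pairwise distinct elements none of which lies in S ∪ T. Then (m_S * F_{{a,c}}) * (m_T * F_{{b,c}}) = m_{S ∪ T ∪ {a,b}} + m_{S ∪ T ∪ {a,b,c}} + m_{S ∪ T ∪ {c}} in R (the semantic identity underlying multiplication rule 19 of the Multiplication Rewriting Principle, where |U ∩ V| = |U \ V| = |V \ U| = 1). -/

import Mathlib

/-!
Every element of `ZMod 2` is idempotent, so the monomials satisfy `m (S ∪ T) = m S * m T` for
arbitrary, not only disjoint, `S` and `T`, and `1 + F U` is the product of the idempotents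
`1 + x i` over `i ∈ U`. Hence `F {a, c} x = x a + x c + x a * x c`, and both sides of the rule
become polynomials in `m S x`, `m T x`, `x a`, `x b`, `x c`, whose equality over `ZMod 2` is a
finite check.
-/

variable {ι : Type*} [DecidableEq ι]

/-- Monomial semantics: `m S` evaluates an assignment `a` to `∏ i ∈ S, a i`. -/
def m (S : Finset ι) : (ι → ZMod 2) → ZMod 2 :=
  fun a => ∏ i ∈ S, a i

/-- Power-set sum semantics: `F U` evaluates `a` to the sum over nonempty subsets `A ⊆ U`
of `∏ i ∈ A, a i`. -/
def F (U : Finset ι) : (ι → ZMod 2) → ZMod 2 :=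
  fun a => ∑ A ∈ U.powerset.erase ∅, ∏ i ∈ A, a i

theorem Finset.prod_union_of_isIdempotentElem {M : Type*} [CommMonoid M] {f : ι → M}
    (hf : ∀ i, IsIdempotentElem (f i)) (s t : Finset ι) :
    ∏ i ∈ s ∪ t, f i = (∏ i ∈ s, f i) * ∏ i ∈ t, f i := by
  have hinter : IsIdempotentElem (∏ i ∈ s ∩ t, f i) :=
    Finset.prod_induction _ _ (fun _ _ hx hy => hx.mul hy) IsIdempotentElem.one
      (fun i _ => hf i)
  have hsub : s ∩ t ⊆ s ∪ t := Finset.inter_subset_union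
  calc ∏ i ∈ s ∪ t, f i
      = (∏ i ∈ (s ∪ t) \ (s ∩ t), f i) * ∏ i ∈ s ∩ t, f i := (Finset.prod_sdiff hsub).symm
    _ = (∏ i ∈ (s ∪ t) \ (s ∩ t), f i) * (∏ i ∈ s ∩ t, f i) * ∏ i ∈ s ∩ t, f i := by
      rw [mul_assoc, hinter.eq]
    _ = (∏ i ∈ s ∪ t, f i) * ∏ i ∈ s ∩ t, f i := by rw [Finset.prod_sdiff hsub]
    _ = (∏ i ∈ s, f i) * ∏ i ∈ t, f i := Finset.prod_union_inter

theorem isIdempotentElem_zmod_two (x : ZMod 2) : IsIdempotentElem x := by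
  fin_cases x <;> rfl

theorem m_union (S T : Finset ι) (x : ι → ZMod 2) : m (S ∪ T) x = m S x * m T x :=
  Finset.prod_union_of_isIdempotentElem (fun i => isIdempotentElem_zmod_two (x i)) S T

theorem one_add_F (U : Finset ι) (x : ι → ZMod 2) : 1 + F U x = ∏ i ∈ U, (1 + x i) := by
  rw [Finset.prod_one_add, F, ← Finset.add_sum_erase _ _ (Finset.empty_mem_powerset U),
    Finset.prod_empty]

theorem F_pair (a c : ι) (x : ι → ZMod 2) : F {a, c} x = x a + x c + x a * x c := by
  have h : 1 + F {a, c} x = (1 + x a) * (1 + x c) := by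
    rw [one_add_F, Finset.insert_eq, Finset.prod_union_of_isIdempotentElem
      (fun i => isIdempotentElem_zmod_two (1 + x i)), Finset.prod_singleton,
      Finset.prod_singleton]
  linear_combination h

theorem stmt19_general (S T : Finset ι) (a b c : ι) :
    (m S * F {a, c}) * (m T * F {b, c})
      = m (S ∪ T ∪ {a, b}) + m (S ∪ T ∪ {a, b, c}) + m (S ∪ T ∪ {c}) := by
  have key : ∀ u v p q r : ZMod 2,
      (u * (p + r + p * r)) * (v * (q + r + q * r))
        = u * v * (p * q) + u * v * (p * (q * r)) + u * v * r := by
    decide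
  funext x
  simp only [Pi.mul_apply, Pi.add_apply, F_pair]
  simp only [Finset.insert_eq, m_union]
  simp only [m, Finset.prod_singleton]
  exact key _ _ _ _ _

theorem stmt19 (S T : Finset ι) (a b c : ι)
    (hab : a ≠ b) (hac : a ≠ c) (hbc : b ≠ c)
    (haST : a ∉ S ∪ T) (hbST : b ∉ S ∪ T) (hcST : c ∉ S ∪ T) :
    (m S * F {a, c}) * (m T * F {b, c})
      = m (S ∪ T ∪ {a, b}) + m (S ∪ T ∪ {a, b, c}) + m (S ∪ T ∪ {c}) :=
  stmt19_general S T a b c
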